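/- For an even integer k ≥ 2, the constant c(h_k) := ∫∫_{ℝ²} h_k(x,y) p(1,y) dx dy, where h_k(x,y) = [sgn(x+y) exp(-2(x(x+y))^+ )]^k (taking T = 1), equals 2∫_0^∞ Φ(-x) dx + (2/(2k-1)) ∫_0^∞ exp(2k(k-1)x²/(2k-1)²) Φ(-x) dx, where Φ is the standard normal CDF. -/

import Mathlib

noncomputable def stdGauss (y : ℝ) : ℝ :=
  (Real.sqrt (2 * Real.pi))⁻¹ * Real.exp (-y^2 / 2)

noncomputable def stdNormalCDF (z : ℝ) : ℝ := ∫ u in Set.Iic z, stdGauss u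

/-- `h_k` with `T = 1`. -/
noncomputable def hFun (k : ℕ) (x y : ℝ) : ℝ :=
  (Real.sign (x + y) * Real.exp (-2 * max (x * (x + y)) 0))^k

/-!
For `x ≥ 0` the integrand `h_k(x, ·)` is `1` to the left of `-x` (as `k` is even) and the
exponential tilt `exp(-2kx(x + y))` to the right of it. Completing the square turns the tilted
Gaussian into `exp(2k(k-1)x²)` times the Gaussian shifted by `2kx`, so the inner integral is
`Φ(-x) + exp(2k(k-1)x²) Φ(-(2k-1)x)`. Evenness of `k` gives `h_k(-x, y) = h_k(x, -y)`, so the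
outer integral is twice the one over `x > 0`, and the substitution `x ↦ (2k-1)x` in the second
term yields the claim. Both terms are integrable by the tail bound `Φ(-z) ≤ exp(-z²/2)`, since
`(2k-1)² = 4k(k-1) + 1`.
-/

open MeasureTheory Set Real ProbabilityTheory

lemma stdGauss_eq_gaussianPDFReal : stdGauss = gaussianPDFReal 0 1 := by
  ext y
  simp [stdGauss, gaussianPDFReal]

lemma stdGauss_nonneg (y : ℝ) : 0 ≤ stdGauss y :=
  stdGauss_eq_gaussianPDFReal ▸ gaussianPDFReal_nonneg 0 1 y

lemma stdGauss_neg (y : ℝ) : stdGauss (-y) = stdGauss y := by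
  simp [stdGauss]

lemma integrable_stdGauss : Integrable stdGauss :=
  stdGauss_eq_gaussianPDFReal ▸ integrable_gaussianPDFReal 0 1

lemma integral_stdGauss : ∫ y, stdGauss y = 1 :=
  stdGauss_eq_gaussianPDFReal ▸ integral_gaussianPDFReal_eq_one 0 one_ne_zero

lemma exp_neg_mul_mul_stdGauss (b y : ℝ) :
    exp (-(b * y)) * stdGauss y = exp (b ^ 2 / 2) * stdGauss (y + b) := by
  simp only [stdGauss]
  rw [mul_left_comm, ← exp_add, mul_left_comm, ← exp_add]
  ring_nf

lemma integral_Ioi_comp_add_right {E : Type*} [NormedAddCommGroup E] [NormedSpace ℝ E]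
    (f : ℝ → E) (t c : ℝ) : ∫ y in Ioi t, f (y + c) = ∫ y in Ioi (t + c), f y := by
  simpa [preimage_add_const_Ioi] using
    (measurePreserving_add_right volume c).setIntegral_preimage_emb
      (measurableEmbedding_addRight c) f (Ioi (t + c))

lemma stdNormalCDF_neg (z : ℝ) : stdNormalCDF (-z) = ∫ u in Ioi z, stdGauss u := by
  rw [stdNormalCDF, ← integral_comp_neg_Ioi]
  simp only [stdGauss_neg]

lemma stdNormalCDF_nonneg (z : ℝ) : 0 ≤ stdNormalCDF z :=
  setIntegral_nonneg measurableSet_Iic fun y _ => stdGauss_nonneg y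

lemma monotone_stdNormalCDF : Monotone stdNormalCDF := fun _ _ hab =>
  setIntegral_mono_set integrable_stdGauss.integrableOn (ae_of_all _ stdGauss_nonneg)
    (Iic_subset_Iic.mpr hab).eventuallyLE

lemma stdNormalCDF_neg_le_exp {z : ℝ} (hz : 0 ≤ z) :
    stdNormalCDF (-z) ≤ exp (-z ^ 2 / 2) := by
  have tilt : ∀ v ∈ Ioi (0 : ℝ), stdGauss (v + z) ≤ exp (-z ^ 2 / 2) * stdGauss v := by
    intro v hv
    have h := exp_neg_mul_mul_stdGauss z v
    calc stdGauss (v + z) = exp (-z ^ 2 / 2) * (exp (-(z * v)) * stdGauss v) := by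
          rw [h, ← mul_assoc, ← exp_add, neg_div, neg_add_cancel, exp_zero, one_mul]
      _ ≤ exp (-z ^ 2 / 2) * stdGauss v := by
          gcongr
          exact mul_le_of_le_one_left (stdGauss_nonneg v)
            (exp_le_one_iff.mpr (by nlinarith [mem_Ioi.mp hv]))
  calc stdNormalCDF (-z) = ∫ v in Ioi 0, stdGauss (v + z) := by
        rw [stdNormalCDF_neg, integral_Ioi_comp_add_right, zero_add]
    _ ≤ ∫ v in Ioi 0, exp (-z ^ 2 / 2) * stdGauss v :=
        setIntegral_mono_on (integrable_stdGauss.comp_add_right z).integrableOn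
          (integrable_stdGauss.const_mul _).integrableOn measurableSet_Ioi tilt
    _ ≤ exp (-z ^ 2 / 2) * ∫ v, stdGauss v := by
        rw [integral_const_mul]
        exact mul_le_mul_of_nonneg_left
          (setIntegral_le_integral integrable_stdGauss (ae_of_all _ stdGauss_nonneg))
          (exp_pos _).le
    _ = exp (-z ^ 2 / 2) := by rw [integral_stdGauss, mul_one]

lemma integrableOn_exp_mul_sq_mul_stdNormalCDF_neg {a c : ℝ} (hc : 0 ≤ c)
    (hac : 2 * a + 1 ≤ c ^ 2) :
    IntegrableOn (fun x => exp (a * x ^ 2) * stdNormalCDF (-(c * x))) (Ioi 0) := by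
  have hmeas : Measurable fun x => exp (a * x ^ 2) * stdNormalCDF (-(c * x)) := by
    have := monotone_stdNormalCDF.measurable
    fun_prop
  refine (integrable_exp_neg_mul_sq (b := 1 / 2) (by norm_num)).integrableOn.mono'
    hmeas.aestronglyMeasurable ((ae_restrict_iff' measurableSet_Ioi).mpr (ae_of_all _ ?_))
  intro x hx
  have hcx : 0 ≤ c * x := mul_nonneg hc (le_of_lt hx)
  rw [norm_of_nonneg (mul_nonneg (exp_pos _).le (stdNormalCDF_nonneg _))]
  calc exp (a * x ^ 2) * stdNormalCDF (-(c * x)) ≤ exp (a * x ^ 2) * exp (-(c * x) ^ 2 / 2) := by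
        gcongr
        exact stdNormalCDF_neg_le_exp hcx
    _ = exp (a * x ^ 2 - c ^ 2 * x ^ 2 / 2) := by rw [← exp_add]; ring_nf
    _ ≤ exp (-(1 / 2) * x ^ 2) := by
        gcongr
        nlinarith [sq_nonneg x]

lemma hFun_of_add_neg {k : ℕ} (hke : Even k) {x y : ℝ} (hx : 0 ≤ x) (h : x + y < 0) :
    hFun k x y = 1 := by
  rw [hFun, Real.sign_of_neg h, max_eq_right (mul_nonpos_of_nonneg_of_nonpos hx h.le), mul_zero,
    exp_zero, mul_one, hke.neg_one_pow]

lemma hFun_of_add_pos (k : ℕ) {x y : ℝ} (hx : 0 ≤ x) (h : 0 < x + y) :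
    hFun k x y = exp (-(2 * k * x) * (x + y)) := by
  rw [hFun, Real.sign_of_pos h, one_mul, max_eq_left (mul_nonneg hx h.le), ← exp_nat_mul]
  ring_nf

lemma hFun_neg_left {k : ℕ} (hke : Even k) (x y : ℝ) : hFun k (-x) y = hFun k x (-y) := by
  rw [hFun, hFun, show -x + y = -(x + -y) by ring, show -x * -(x + -y) = x * (x + -y) by ring,
    Real.sign_neg, neg_mul, hke.neg_pow]

lemma integral_hFun_mul_stdGauss_of_nonneg {k : ℕ} (hke : Even k) {x : ℝ} (hx : 0 ≤ x) :
    ∫ y, hFun k x y * stdGauss y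
      = stdNormalCDF (-x) + exp (2 * k * (k - 1) * x ^ 2) * stdNormalCDF (-((2 * k - 1) * x)) := by
  set C := exp (2 * k * (k - 1) * x ^ 2)
  have hsplit : (fun y => hFun k x y * stdGauss y) =ᵐ[volume]
      fun y => (Iic (-x)).indicator stdGauss y
        + (Ioi (-x)).indicator (fun y => C * stdGauss (y + 2 * k * x)) y := by
    filter_upwards [Measure.ae_ne volume (-x)] with y hy
    rcases hy.lt_or_gt with h | h
    · rw [hFun_of_add_neg hke hx (by linarith), one_mul,
        indicator_of_mem (mem_Iic.mpr h.le), indicator_of_notMem (by simpa using h.le), add_zero]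
    · rw [hFun_of_add_pos k hx (by linarith), indicator_of_notMem (by simpa using h),
        indicator_of_mem (mem_Ioi.mpr h), zero_add, neg_mul, mul_add, neg_add, exp_add, mul_assoc,
        exp_neg_mul_mul_stdGauss, ← mul_assoc, ← exp_add]
      congr 2
      ring
  rw [integral_congr_ae hsplit, integral_add (integrable_stdGauss.indicator measurableSet_Iic)
      (((integrable_stdGauss.comp_add_right _).const_mul C).indicator measurableSet_Ioi),
    integral_indicator measurableSet_Iic, integral_indicator measurableSet_Ioi, integral_const_mul,
    integral_Ioi_comp_add_right, show -x + 2 * k * x = (2 * k - 1) * x by ring,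
    ← stdNormalCDF_neg]
  rfl

lemma integral_hFun_mul_stdGauss {k : ℕ} (hke : Even k) (x : ℝ) :
    ∫ y, hFun k x y * stdGauss y
      = stdNormalCDF (-|x|)
        + exp (2 * k * (k - 1) * |x| ^ 2) * stdNormalCDF (-((2 * k - 1) * |x|)) := by
  rcases le_or_gt 0 x with hx | hx
  · rw [abs_of_nonneg hx]
    exact integral_hFun_mul_stdGauss_of_nonneg hke hx
  · rw [abs_of_neg hx, ← integral_hFun_mul_stdGauss_of_nonneg hke (neg_nonneg.mpr hx.le),
      ← integral_neg_eq_self]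
    simp only [hFun_neg_left hke, stdGauss_neg]

theorem skew_bm_constant_even (k : ℕ) (hk : 2 ≤ k) (hke : Even k) :
    ∫ x : ℝ, ∫ y : ℝ, hFun k x y * stdGauss y
      = 2 * (∫ x in Set.Ioi (0 : ℝ), stdNormalCDF (-x)) +
        (2 / (2 * (k : ℝ) - 1)) *
          ∫ x in Set.Ioi (0 : ℝ),
            Real.exp (2 * k * ((k : ℝ) - 1) * x^2 / (2 * (k : ℝ) - 1)^2) *
              stdNormalCDF (-x) := by
  have hc : 0 < 2 * (k : ℝ) - 1 := by
    have : (2 : ℝ) ≤ k := by exact_mod_cast hk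
    linarith
  have hint₁ : IntegrableOn (fun x => stdNormalCDF (-x)) (Ioi 0) := by
    simpa using integrableOn_exp_mul_sq_mul_stdNormalCDF_neg (a := 0) zero_le_one (by norm_num)
  have hint₂ := integrableOn_exp_mul_sq_mul_stdNormalCDF_neg (a := 2 * k * (k - 1)) hc.le
    (le_of_eq (by ring))
  have hscale : ∫ x in Ioi 0, exp (2 * k * (k - 1) * x ^ 2) * stdNormalCDF (-((2 * k - 1) * x))
      = (2 * (k : ℝ) - 1)⁻¹ * ∫ x in Ioi 0,
          exp (2 * k * (k - 1) * x ^ 2 / (2 * k - 1) ^ 2) * stdNormalCDF (-x) := by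
    have h := integral_comp_mul_left_Ioi
      (fun u => exp (2 * k * (k - 1) * u ^ 2 / (2 * k - 1) ^ 2) * stdNormalCDF (-u)) 0 hc
    rw [mul_zero, smul_eq_mul] at h
    rw [← h]
    congr with x
    field_simp
  calc ∫ x, ∫ y, hFun k x y * stdGauss y
      = ∫ x, (stdNormalCDF (-|x|)
          + exp (2 * k * (k - 1) * |x| ^ 2) * stdNormalCDF (-((2 * k - 1) * |x|))) :=
        integral_congr_ae (ae_of_all _ (integral_hFun_mul_stdGauss hke))
    _ = _ := by
        rw [integral_comp_abs (f := fun t => stdNormalCDF (-t)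
          + exp (2 * k * (k - 1) * t ^ 2) * stdNormalCDF (-((2 * k - 1) * t))),
          integral_add hint₁ hint₂, hscale]
        ring
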